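/- Helstrom limit for channel position finding with orthogonal-replacement channel outputs (Lemma 3): Let φ be a rank-one orthogonal projection (pure state) on ℂ^D and let ρ^⊥ be a density matrix on ℂ^D with φ·ρ^⊥ = 0. For q ∈ [0,1] set σ_q = q·ρ^⊥ + (1−q)·φ. Let m ≥ 2 and q_B, q_T ∈ [0,1], and for n = 0,…,m−1 define the density matrix ρ_n = σ_{c_0} ⊗ σ_{c_1} ⊗ … ⊗ σ_{c_{m−1}} on (ℂ^D)^{⊗m}, where c_n = q_T and c_k = q_B for k ≠ n. Then for every u ≥ 1, the Helstrom error probability of the equiprobable states (ρ_n^{⊗u})_{n=0}^{m−1} equals h_m^u(q_B, q_T). -/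

import Mathlib

open Matrix BigOperators Finset ComplexOrder

noncomputable section

/-- A density matrix: positive semidefinite with unit trace. -/
def IsDensityMatrix {ι : Type*} [Fintype ι] (ρ : Matrix ι ι ℂ) : Prop :=
  ρ.PosSemidef ∧ ρ.trace = 1

/-- The Helstrom minimum error probability for discriminating the states `ρ n`
with prior probabilities `p n`, optimized over all POVMs. -/
def helstrom {ι : Type*} [Fintype ι] [DecidableEq ι] {m : ℕ}
    (ρ : Fin m → Matrix ι ι ℂ) (p : Fin m → ℝ) : ℝ :=
  1 - sSup { x : ℝ | ∃ M : Fin m → Matrix ι ι ℂ,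
      (∀ n, (M n).PosSemidef) ∧ (∑ n, M n) = 1 ∧
      x = ∑ n, p n * ((M n * ρ n).trace).re }

open Classical in
/-- The positive semidefinite square root (junk value `0` off the PSD cone). -/
def psdSqrt {ι : Type*} [Fintype ι] [DecidableEq ι] (A : Matrix ι ι ℂ) : Matrix ι ι ℂ :=
  if h : A.PosSemidef then
    h.1.eigenvectorUnitary.1 * diagonal ((↑) ∘ (√·) ∘ h.1.eigenvalues) *
      (star h.1.eigenvectorUnitary : Matrix ι ι ℂ)
  else 0

/-- The trace norm `‖A‖₁ = tr √(Aᴴ A)`. -/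
def traceNorm {ι : Type*} [Fintype ι] [DecidableEq ι] (A : Matrix ι ι ℂ) : ℝ :=
  ((psdSqrt (Aᴴ * A)).trace).re

/-- The `u`-fold Kronecker (tensor) power of a square matrix. -/
def tensorPow {ι : Type*} (σ : Matrix ι ι ℂ) (u : ℕ) :
    Matrix (Fin u → ι) (Fin u → ι) ℂ :=
  fun i j => ∏ k, σ (i k) (j k)

/-- Tensor product of a family of `m` square matrices. -/
def tensorFam {m : ℕ} {ι : Type*} (σ : Fin m → Matrix ι ι ℂ) :
    Matrix (Fin m → ι) (Fin m → ι) ℂ :=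
  fun i j => ∏ k, σ k (i k) (j k)

/-- Hamming weight of a Boolean string. -/
def hamming {u : ℕ} (x : Fin u → Bool) : ℕ :=
  (Finset.univ.filter fun k => x k = true).card

open Classical in
/-- The channel-position-finding error function `h_m^u(qB,qT)`. -/
def hErr (m u : ℕ) (qB qT : ℝ) : ℝ :=
  1 - (1/(m:ℝ)) * ∑ x : Fin m → Fin u → Bool,
    (let w : Fin m → ℕ := fun ℓ => hamming (x ℓ)
     let W : ℕ := ∑ ℓ, w ℓ
     let ws : ℕ := if qB ≤ qT then Finset.univ.sup w else sInf (Set.range w)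
     qT^ws * (1-qT)^(u-ws) * (qB^(W-ws) * (1-qB)^((m-1)*u-(W-ws))))

/-!
Because `φ ρ⊥ = 0`, each output `σ_q = q ρ⊥ + (1 - q) φ` is a mixture of two states that
the projective measurement `{φ, 1 - φ}` distinguishes without error. Hence every `ρ_n^{⊗u}`
is a mixture, with product-Bernoulli weights `p_n(x)`, of states `Φ_x` indexed by bit strings
and perfectly distinguished by the product measurement. Discrimination is then classical: no
POVM beats `(1/m) Σ_x max_n p_n(x)`, since `Σ_n tr (M_n Φ_x) = 1` with nonnegative terms, and
the maximum-likelihood guess attains it. Finally `p_n(x)` depends on `n` only through the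
weight of block `n`, increasingly if `q_B ≤ q_T` and decreasingly otherwise, so the maximum is
attained at the heaviest, resp. lightest, block.
-/

namespace Matrix

section PiKronecker

variable {J ι κ R : Type*} [Fintype J]

def piKronecker [CommMonoid R] (A : J → Matrix ι ι R) : Matrix (J → ι) (J → ι) R :=
  fun i j => ∏ k, A k (i k) (j k)

variable [CommSemiring R]

theorem piKronecker_one [DecidableEq ι] :
    piKronecker (fun _ : J => (1 : Matrix ι ι R)) = 1 := by
  ext i l
  simp only [piKronecker, one_apply, Finset.prod_boole, Finset.mem_univ, true_implies,
    funext_iff]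

theorem conjTranspose_piKronecker [StarRing R] (A : J → Matrix ι ι R) :
    (piKronecker A)ᴴ = piKronecker fun j => (A j)ᴴ := by
  ext i l
  exact star_prod _ _

variable [DecidableEq J]

theorem piKronecker_mul [Fintype ι] (A B : J → Matrix ι ι R) :
    piKronecker A * piKronecker B = piKronecker fun j => A j * B j := by
  ext i l
  simp only [piKronecker, mul_apply]
  rw [Finset.prod_univ_sum (fun _ => univ) fun j c => A j (i j) c * B j c (l j),
    Fintype.piFinset_univ]
  simp [Finset.prod_mul_distrib]

theorem trace_piKronecker [Fintype ι] (A : J → Matrix ι ι R) :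
    (piKronecker A).trace = ∏ j, (A j).trace := by
  simp only [trace, diag, piKronecker]
  rw [Finset.prod_univ_sum (fun _ => univ) fun j c => A j c c, Fintype.piFinset_univ]

theorem piKronecker_sum_smul [Fintype κ] (c : J → κ → R) (A : J → κ → Matrix ι ι R) :
    piKronecker (fun j => ∑ b, c j b • A j b) =
      ∑ x : J → κ, (∏ j, c j (x j)) • piKronecker fun j => A j (x j) := by
  ext i l
  simp only [piKronecker, sum_apply, smul_apply, smul_eq_mul]
  rw [Finset.prod_univ_sum (fun _ => univ) fun j b => c j b * A j b (i j) (l j),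
    Fintype.piFinset_univ]
  simp [Finset.prod_mul_distrib]

theorem sum_piKronecker [Fintype κ] (A : J → κ → Matrix ι ι R) :
    ∑ x : J → κ, piKronecker (fun j => A j (x j)) = piKronecker fun j => ∑ b, A j b := by
  simpa using (piKronecker_sum_smul (fun _ _ => (1 : R)) A).symm

theorem trace_piKronecker_mul_piKronecker_eq_ite [Fintype ι] [DecidableEq κ]
    {A B : κ → Matrix ι ι R} (h : ∀ a b, (A a * B b).trace = if a = b then 1 else 0)
    (x y : J → κ) :
    (piKronecker (fun j => A (x j)) * piKronecker fun j => B (y j)).trace =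
      if x = y then 1 else 0 := by
  simp only [piKronecker_mul, trace_piKronecker, h, Finset.prod_boole, Finset.mem_univ,
    true_implies, funext_iff]

open scoped MatrixOrder in
theorem PosSemidef.piKronecker {𝕜 : Type*} [RCLike 𝕜] [Fintype ι]
    {A : J → Matrix ι ι 𝕜} (hA : ∀ j, (A j).PosSemidef) : (piKronecker A).PosSemidef := by
  classical
  choose B hB using fun j => CStarAlgebra.nonneg_iff_eq_star_mul_self.mp (hA j).nonneg
  have : Matrix.piKronecker A = (Matrix.piKronecker B)ᴴ * Matrix.piKronecker B := by
    rw [conjTranspose_piKronecker, piKronecker_mul]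
    exact congrArg _ (funext hB)
  rw [this]
  exact posSemidef_conjTranspose_mul_self _

end PiKronecker

open scoped MatrixOrder in
theorem PosSemidef.trace_mul_nonneg {𝕜 ι : Type*} [RCLike 𝕜] [Fintype ι]
    {A B : Matrix ι ι 𝕜} (hA : A.PosSemidef) (hB : B.PosSemidef) : 0 ≤ (A * B).trace := by
  classical
  obtain ⟨C, rfl⟩ := CStarAlgebra.nonneg_iff_eq_star_mul_self.mp hB.nonneg
  rw [star_eq_conjTranspose, ← Matrix.mul_assoc, trace_mul_comm, ← Matrix.mul_assoc]
  exact (hA.mul_mul_conjTranspose_same C).trace_nonneg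

end Matrix

section Helstrom

variable {ι Ω : Type*} [Fintype ι] [DecidableEq ι] [Fintype Ω] {m : ℕ}
  {ρ : Fin m → Matrix ι ι ℂ} {π : Fin m → ℝ}

theorem helstrom_eq_of_isGreatest {V : ℝ}
    (hle : ∀ M : Fin m → Matrix ι ι ℂ, (∀ n, (M n).PosSemidef) → ∑ n, M n = 1 →
      ∑ n, π n * ((M n * ρ n).trace).re ≤ V)
    {M : Fin m → Matrix ι ι ℂ} (hM : ∀ n, (M n).PosSemidef) (hM1 : ∑ n, M n = 1)
    (hMV : ∑ n, π n * ((M n * ρ n).trace).re = V) : helstrom ρ π = 1 - V := by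
  rw [helstrom]
  congr 1
  refine IsGreatest.csSup_eq ⟨⟨M, hM, hM1, hMV.symm⟩, ?_⟩
  rintro _ ⟨M', hM', hM'1, rfl⟩
  exact hle M' hM' hM'1

variable {p : Fin m → Ω → ℝ} {Φ : Ω → Matrix ι ι ℂ}

theorem sum_re_trace_mul_le_of_eq_sum_smul (hΦ : ∀ x, IsDensityMatrix (Φ x))
    (hρ : ∀ n, ρ n = ∑ x, (p n x : ℂ) • Φ x)
    {g : Ω → Fin m} (hg : ∀ n x, π n * p n x ≤ π (g x) * p (g x) x)
    {M : Fin m → Matrix ι ι ℂ} (hM : ∀ n, (M n).PosSemidef) (hM1 : ∑ n, M n = 1) :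
    ∑ n, π n * ((M n * ρ n).trace).re ≤ ∑ x, π (g x) * p (g x) x := by
  have hnonneg : ∀ n x, 0 ≤ ((M n * Φ x).trace).re := fun n x =>
    (Complex.nonneg_iff.mp ((hM n).trace_mul_nonneg (hΦ x).1)).1
  have hsum : ∀ x, ∑ n, ((M n * Φ x).trace).re = 1 := fun x => by
    rw [← Complex.re_sum, ← trace_sum, ← Finset.sum_mul, hM1, Matrix.one_mul, (hΦ x).2,
      Complex.one_re]
  have hexpand : ∀ n, ((M n * ρ n).trace).re = ∑ x, p n x * ((M n * Φ x).trace).re := by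
    intro n
    simp [hρ, Matrix.mul_sum, trace_sum, Complex.re_sum]
  calc ∑ n, π n * ((M n * ρ n).trace).re
      = ∑ x, ∑ n, π n * p n x * ((M n * Φ x).trace).re := by
        simp only [hexpand, Finset.mul_sum, mul_assoc]
        exact Finset.sum_comm
    _ ≤ ∑ x, ∑ n, π (g x) * p (g x) x * ((M n * Φ x).trace).re := by
        refine Finset.sum_le_sum fun x _ => Finset.sum_le_sum fun n _ => ?_
        exact mul_le_mul_of_nonneg_right (hg n x) (hnonneg n x)
    _ = ∑ x, π (g x) * p (g x) x := by simp only [← Finset.mul_sum, hsum, mul_one]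

variable [DecidableEq Ω] {Q : Ω → Matrix ι ι ℂ}

theorem sum_re_trace_fiberwise_mul_eq (hQΦ : ∀ x y, (Q x * Φ y).trace = if x = y then 1 else 0)
    (hρ : ∀ n, ρ n = ∑ x, (p n x : ℂ) • Φ x) (g : Ω → Fin m) :
    ∑ n, π n * (((∑ x with g x = n, Q x) * ρ n).trace).re = ∑ x, π (g x) * p (g x) x := by
  have hQρ : ∀ x n, (Q x * ρ n).trace = p n x := fun x n => by
    simp [hρ, Matrix.mul_sum, trace_sum, hQΦ]
  rw [← Finset.sum_fiberwise univ g fun x => π (g x) * p (g x) x]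
  refine Finset.sum_congr rfl fun n _ => ?_
  rw [Finset.sum_mul, trace_sum, Complex.re_sum, Finset.mul_sum]
  refine Finset.sum_congr rfl fun x hx => ?_
  rw [(Finset.mem_filter.mp hx).2, hQρ, Complex.ofReal_re]

theorem helstrom_eq_of_eq_sum_smul (hΦ : ∀ x, (Φ x).PosSemidef) (hQ : ∀ x, (Q x).PosSemidef)
    (hQ1 : ∑ x, Q x = 1) (hQΦ : ∀ x y, (Q x * Φ y).trace = if x = y then 1 else 0)
    (hρ : ∀ n, ρ n = ∑ x, (p n x : ℂ) • Φ x)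
    {g : Ω → Fin m} (hg : ∀ n x, π n * p n x ≤ π (g x) * p (g x) x) :
    helstrom ρ π = 1 - ∑ x, π (g x) * p (g x) x := by
  have hΦtr : ∀ y, (Φ y).trace = 1 := fun y => by
    simpa [← Finset.sum_mul, hQ1, hQΦ] using trace_sum univ fun x => Q x * Φ y
  refine helstrom_eq_of_isGreatest
    (fun _ => sum_re_trace_mul_le_of_eq_sum_smul (fun x => ⟨hΦ x, hΦtr x⟩) hρ hg)
    (fun n => posSemidef_sum _ fun x _ => hQ x) ?_ (sum_re_trace_fiberwise_mul_eq hQΦ hρ g)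
  rw [Finset.sum_fiberwise univ g Q, hQ1]

end Helstrom

section OrthogonalReplacement

variable {ι : Type*} {φ ρ : Matrix ι ι ℂ}

def bernoulliProb (c : ℝ) (b : Bool) : ℝ := if b then c else 1 - c

def orcBranch (φ ρ : Matrix ι ι ℂ) (b : Bool) : Matrix ι ι ℂ := if b then ρ else φ

theorem smul_add_smul_eq_sum_orcBranch (c : ℝ) :
    (c : ℂ) • ρ + ((1 - c : ℝ) : ℂ) • φ =
      ∑ b, (bernoulliProb c b : ℂ) • orcBranch φ ρ b := by
  rw [Fintype.sum_bool]
  simp only [bernoulliProb, orcBranch, if_true, Bool.false_eq_true, if_false]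

variable [DecidableEq ι]

def orcTest (φ : Matrix ι ι ℂ) (b : Bool) : Matrix ι ι ℂ := if b then 1 - φ else φ

open scoped MatrixOrder in
theorem orcTest_posSemidef [Fintype ι] (hφ : IsStarProjection φ) (b : Bool) :
    (orcTest φ b).PosSemidef := by
  cases b
  · exact nonneg_iff_posSemidef.mp hφ.nonneg
  · exact nonneg_iff_posSemidef.mp hφ.one_sub.nonneg

theorem orcBranch_posSemidef [Fintype ι] (hφ : IsStarProjection φ) (hρ : ρ.PosSemidef)
    (b : Bool) : (orcBranch φ ρ b).PosSemidef := by
  cases b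
  · exact orcTest_posSemidef hφ false
  · exact hρ

theorem sum_orcTest : ∑ b, orcTest φ b = 1 := by
  simp [orcTest]

theorem trace_orcTest_mul_orcBranch [Fintype ι] (hφ : IsIdempotentElem φ) (hφtr : φ.trace = 1)
    (hρtr : ρ.trace = 1) (horth : φ * ρ = 0) (a b : Bool) :
    (orcTest φ a * orcBranch φ ρ b).trace = if a = b then 1 else 0 := by
  cases a <;> cases b <;>
    simp [orcTest, orcBranch, Matrix.sub_mul, horth, hφ.eq, hφtr, hρtr]

end OrthogonalReplacement

section Likelihood

theorem prod_pow_mul_pow_sub {α M : Type*} [CommMonoid M] (s : Finset α) (w : α → ℕ)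
    {u : ℕ} (hw : ∀ a ∈ s, w a ≤ u) (c d : M) :
    ∏ a ∈ s, c ^ w a * d ^ (u - w a) =
      c ^ (∑ a ∈ s, w a) * d ^ (s.card * u - ∑ a ∈ s, w a) := by
  have hsum : ∑ a ∈ s, (u - w a) + ∑ a ∈ s, w a = s.card * u := by
    rw [← Finset.sum_add_distrib, Finset.sum_congr rfl fun a ha => Nat.sub_add_cancel (hw a ha),
      Finset.sum_const, smul_eq_mul]
  rw [Finset.prod_mul_distrib, Finset.prod_pow_eq_pow_sum, Finset.prod_pow_eq_pow_sum,
    ← hsum, Nat.add_sub_cancel]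

theorem hamming_le {u : ℕ} (y : Fin u → Bool) : hamming y ≤ u :=
  (Finset.card_filter_le _ _).trans_eq (Finset.card_fin u)

theorem prod_bernoulliProb {u : ℕ} (c : ℝ) (y : Fin u → Bool) :
    ∏ k, bernoulliProb c (y k) = c ^ hamming y * (1 - c) ^ (u - hamming y) := by
  have hcard := Finset.card_filter_add_card_filter_not (s := univ) fun k => y k = true
  rw [Finset.card_univ, Fintype.card_fin] at hcard
  simp only [bernoulliProb, Finset.prod_ite, Finset.prod_const, hamming]
  rw [show #{k | ¬y k = true} = u - #{k | y k = true} by omega]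

variable {m u : ℕ}

def blockWeight (x : Fin u → Fin m → Bool) (ℓ : Fin m) : ℕ := hamming fun k => x k ℓ

/-- `x k ℓ` records whether the `k`-th use of channel `ℓ` replaced its input. -/
def cpfLikelihood (qB qT : ℝ) (n : Fin m) (x : Fin u → Fin m → Bool) : ℝ :=
  ∏ k, ∏ ℓ, bernoulliProb (if ℓ = n then qT else qB) (x k ℓ)

/-- The summand of `hErr`, as a function of the total weight `W` and the target weight `v`. -/
def cpfTerm (m u : ℕ) (qB qT : ℝ) (W v : ℕ) : ℝ :=
  qT ^ v * (1 - qT) ^ (u - v) * (qB ^ (W - v) * (1 - qB) ^ ((m - 1) * u - (W - v)))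

theorem cpfLikelihood_eq_cpfTerm (qB qT : ℝ) (n : Fin m) (x : Fin u → Fin m → Bool) :
    cpfLikelihood qB qT n x = cpfTerm m u qB qT (∑ ℓ, blockWeight x ℓ) (blockWeight x n) := by
  have hle : ∀ ℓ, blockWeight x ℓ ≤ u := fun ℓ => hamming_le _
  have hblock : ∀ c ℓ, ∏ k, bernoulliProb c (x k ℓ) =
      c ^ blockWeight x ℓ * (1 - c) ^ (u - blockWeight x ℓ) :=
    fun c ℓ => prod_bernoulliProb c _
  have hcard : ({n}ᶜ : Finset (Fin m)).card = m - 1 := by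
    rw [Finset.card_compl, Finset.card_singleton, Fintype.card_fin]
  rw [cpfLikelihood, Finset.prod_comm]
  simp only [hblock]
  rw [Fintype.prod_eq_mul_prod_compl n, if_pos rfl,
    Finset.prod_congr rfl fun ℓ hℓ => by
      rw [if_neg (Finset.mem_compl.mp hℓ ∘ mem_singleton.mpr)],
    prod_pow_mul_pow_sub _ _ fun ℓ _ => hle ℓ, hcard, cpfTerm,
    Fintype.sum_eq_add_sum_compl n, Nat.add_sub_cancel_left]

theorem sum_blockWeight_sub_le (x : Fin u → Fin m → Bool) (n : Fin m) :
    ∑ ℓ, blockWeight x ℓ - blockWeight x n ≤ (m - 1) * u := by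
  have hcard : ({n}ᶜ : Finset (Fin m)).card = m - 1 := by
    rw [Finset.card_compl, Finset.card_singleton, Fintype.card_fin]
  rw [Fintype.sum_eq_add_sum_compl n, Nat.add_sub_cancel_left, ← hcard, ← smul_eq_mul]
  exact Finset.sum_le_card_nsmul _ _ _ fun ℓ _ => hamming_le _

variable {qB qT : ℝ}

/-- Moving `d` units of weight onto the target block multiplies the term by the likelihood
ratio `(qT * (1 - qB)) / (qB * (1 - qT))` to the power `d`; stated without division. -/
theorem exists_cpfTerm_eq_mul_pow (hB : qB ∈ Set.Icc (0 : ℝ) 1)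
    (hT : qT ∈ Set.Icc (0 : ℝ) 1) {W a d : ℕ} (hu : a + d ≤ u) (hW : a + d ≤ W)
    (hK : W - a ≤ (m - 1) * u) :
    ∃ C, 0 ≤ C ∧ cpfTerm m u qB qT W a = C * (qB * (1 - qT)) ^ d ∧
      cpfTerm m u qB qT W (a + d) = C * (qT * (1 - qB)) ^ d := by
  have h1B : 0 ≤ 1 - qB := sub_nonneg.mpr hB.2
  have h1T : 0 ≤ 1 - qT := sub_nonneg.mpr hT.2
  have hB0 := hB.1
  have hT0 := hT.1
  refine ⟨qT ^ a * (1 - qT) ^ (u - (a + d)) * qB ^ (W - (a + d)) *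
    (1 - qB) ^ ((m - 1) * u - (W - a)), by positivity, ?_, ?_⟩
  · rw [cpfTerm]
    generalize (m - 1) * u - (W - a) = r
    rw [show u - a = u - (a + d) + d by omega, show W - a = W - (a + d) + d by omega, mul_pow]
    ring
  · rw [cpfTerm, show (m - 1) * u - (W - (a + d)) = (m - 1) * u - (W - a) + d by omega, mul_pow]
    ring

theorem cpfTerm_mono (hB : qB ∈ Set.Icc (0 : ℝ) 1) (hT : qT ∈ Set.Icc (0 : ℝ) 1)
    (hq : qB ≤ qT) {W a b : ℕ} (hab : a ≤ b) (hu : b ≤ u) (hW : b ≤ W)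
    (hK : W - a ≤ (m - 1) * u) : cpfTerm m u qB qT W a ≤ cpfTerm m u qB qT W b := by
  obtain ⟨d, rfl⟩ := Nat.exists_eq_add_of_le hab
  obtain ⟨C, hC, ha, hb⟩ := exists_cpfTerm_eq_mul_pow hB hT hu hW hK
  rw [ha, hb]
  refine mul_le_mul_of_nonneg_left (pow_le_pow_left₀ ?_ ?_ d) hC
  · exact mul_nonneg hB.1 (sub_nonneg.mpr hT.2)
  · nlinarith [hB.1, hT.2]

theorem cpfTerm_anti (hB : qB ∈ Set.Icc (0 : ℝ) 1) (hT : qT ∈ Set.Icc (0 : ℝ) 1)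
    (hq : qT ≤ qB) {W a b : ℕ} (hab : a ≤ b) (hu : b ≤ u) (hW : b ≤ W)
    (hK : W - a ≤ (m - 1) * u) : cpfTerm m u qB qT W b ≤ cpfTerm m u qB qT W a := by
  obtain ⟨d, rfl⟩ := Nat.exists_eq_add_of_le hab
  obtain ⟨C, hC, ha, hb⟩ := exists_cpfTerm_eq_mul_pow hB hT hu hW hK
  rw [ha, hb]
  refine mul_le_mul_of_nonneg_left (pow_le_pow_left₀ ?_ ?_ d) hC
  · exact mul_nonneg hT.1 (sub_nonneg.mpr hB.2)
  · nlinarith [hT.1, hB.2]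

variable (qB qT) in
/-- The `w*` of `hErr`. -/
def optimalWeight (x : Fin u → Fin m → Bool) : ℕ :=
  if qB ≤ qT then univ.sup (blockWeight x) else sInf (Set.range (blockWeight x))

variable (qB qT) in
theorem exists_blockWeight_eq_optimalWeight [NeZero m] (x : Fin u → Fin m → Bool) :
    ∃ n, blockWeight x n = optimalWeight qB qT x := by
  unfold optimalWeight
  split_ifs
  · obtain ⟨n, -, h⟩ := Finset.exists_mem_eq_sup univ univ_nonempty (blockWeight x)
    exact ⟨n, h.symm⟩
  · exact Nat.sInf_mem (Set.range_nonempty _)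

theorem cpfLikelihood_le_of_blockWeight_eq (hB : qB ∈ Set.Icc (0 : ℝ) 1)
    (hT : qT ∈ Set.Icc (0 : ℝ) 1) {x : Fin u → Fin m → Bool} {g : Fin m}
    (hg : blockWeight x g = optimalWeight qB qT x) (n : Fin m) :
    cpfLikelihood qB qT n x ≤ cpfLikelihood qB qT g x := by
  have hle_sum : ∀ ℓ, blockWeight x ℓ ≤ ∑ ℓ, blockWeight x ℓ := fun ℓ =>
    Finset.single_le_sum (fun _ _ => Nat.zero_le _) (mem_univ ℓ)
  rw [cpfLikelihood_eq_cpfTerm, cpfLikelihood_eq_cpfTerm]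
  by_cases hq : qB ≤ qT
  · refine cpfTerm_mono hB hT hq ?_ (hamming_le _) (hle_sum g) (sum_blockWeight_sub_le x n)
    rw [hg, optimalWeight, if_pos hq]
    exact Finset.le_sup (mem_univ n)
  · refine cpfTerm_anti hB hT (le_of_not_ge hq) ?_ (hamming_le _) (hle_sum n)
      (sum_blockWeight_sub_le x g)
    rw [hg, optimalWeight, if_neg hq]
    exact Nat.sInf_le ⟨n, rfl⟩

end Likelihood

section ChannelPositionFinding

variable {ι : Type*} {φ ρ : Matrix ι ι ℂ} {m u : ℕ}

def cpfBranch (φ ρ : Matrix ι ι ℂ) (x : Fin u → Fin m → Bool) :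
    Matrix (Fin u → Fin m → ι) (Fin u → Fin m → ι) ℂ :=
  piKronecker fun k => piKronecker fun ℓ => orcBranch φ ρ (x k ℓ)

theorem tensorPow_tensorFam_eq_sum_cpfBranch (c : Fin m → ℝ) :
    tensorPow (tensorFam fun ℓ => (c ℓ : ℂ) • ρ + ((1 - c ℓ : ℝ) : ℂ) • φ) u =
      ∑ x : Fin u → Fin m → Bool,
        ((∏ k, ∏ ℓ, bernoulliProb (c ℓ) (x k ℓ) : ℝ) : ℂ) • cpfBranch φ ρ x := by
  change piKronecker (fun _ : Fin u => piKronecker fun ℓ => _) = _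
  simp only [smul_add_smul_eq_sum_orcBranch, piKronecker_sum_smul]
  push_cast
  rfl

variable [DecidableEq ι]

def cpfTest (φ : Matrix ι ι ℂ) (x : Fin u → Fin m → Bool) :
    Matrix (Fin u → Fin m → ι) (Fin u → Fin m → ι) ℂ :=
  piKronecker fun k => piKronecker fun ℓ => orcTest φ (x k ℓ)

theorem sum_cpfTest : ∑ x : Fin u → Fin m → Bool, cpfTest φ x = 1 := by
  simp only [cpfTest, sum_piKronecker (fun (_ : Fin u) (y : Fin m → Bool) =>
    piKronecker fun ℓ => orcTest φ (y ℓ)), sum_piKronecker, sum_orcTest, piKronecker_one]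

variable [Fintype ι]

theorem cpfBranch_posSemidef (hφ : IsStarProjection φ) (hρ : ρ.PosSemidef)
    (x : Fin u → Fin m → Bool) : (cpfBranch φ ρ x).PosSemidef :=
  .piKronecker fun _ => .piKronecker fun _ => orcBranch_posSemidef hφ hρ _

theorem cpfTest_posSemidef (hφ : IsStarProjection φ) (x : Fin u → Fin m → Bool) :
    (cpfTest φ x).PosSemidef :=
  .piKronecker fun _ => .piKronecker fun _ => orcTest_posSemidef hφ _

theorem trace_cpfTest_mul_cpfBranch (hφ : IsIdempotentElem φ) (hφtr : φ.trace = 1)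
    (hρtr : ρ.trace = 1) (horth : φ * ρ = 0) (x y : Fin u → Fin m → Bool) :
    (cpfTest φ x * cpfBranch φ ρ y).trace = if x = y then 1 else 0 :=
  trace_piKronecker_mul_piKronecker_eq_ite
    (trace_piKronecker_mul_piKronecker_eq_ite
      (trace_orcTest_mul_orcBranch hφ hφtr hρtr horth)) x y

end ChannelPositionFinding

theorem helstrom_CPF_orc_general {D : ℕ} (φ ρp : Matrix (Fin D) (Fin D) ℂ)
    (hherm : φᴴ = φ) (hproj : φ * φ = φ) (htr : φ.trace = 1)
    (hρp : IsDensityMatrix ρp) (horth : φ * ρp = 0)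
    (m : ℕ) (hm : 2 ≤ m) (qB qT : ℝ)
    (hB : qB ∈ Set.Icc (0:ℝ) 1) (hT : qT ∈ Set.Icc (0:ℝ) 1)
    (u : ℕ) :
    helstrom (fun n : Fin m => tensorPow (tensorFam (fun k =>
        if k = n then (qT:ℂ) • ρp + (((1-qT : ℝ)):ℂ) • φ
        else (qB:ℂ) • ρp + (((1-qB : ℝ)):ℂ) • φ)) u)
      (fun _ => 1/(m:ℝ)) = hErr m u qB qT := by
  have hφ : IsStarProjection φ := ⟨hproj, hherm⟩
  have : NeZero m := ⟨by omega⟩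
  choose g hg using exists_blockWeight_eq_optimalWeight (m := m) (u := u) qB qT
  have hstate : ∀ n : Fin m, tensorPow (tensorFam fun k =>
      if k = n then (qT:ℂ) • ρp + (((1-qT : ℝ)):ℂ) • φ
      else (qB:ℂ) • ρp + (((1-qB : ℝ)):ℂ) • φ) u =
      ∑ x, (cpfLikelihood qB qT n x : ℂ) • cpfBranch φ ρp x := fun n => by
    simp only [cpfLikelihood]
    rw [← tensorPow_tensorFam_eq_sum_cpfBranch fun ℓ => if ℓ = n then qT else qB]
    congr! 3 with ℓ
    split_ifs <;> rfl
  rw [helstrom_eq_of_eq_sum_smul (cpfBranch_posSemidef hφ hρp.1) (cpfTest_posSemidef hφ)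
    sum_cpfTest (trace_cpfTest_mul_cpfBranch hproj htr hρp.2 horth) hstate (g := g)
    fun n x => mul_le_mul_of_nonneg_left (cpfLikelihood_le_of_blockWeight_eq hB hT (hg x) n)
      (by positivity), hErr, ← Finset.mul_sum]
  congr 2
  exact Fintype.sum_equiv (Equiv.piComm _) _ _ fun x => by
    rw [cpfLikelihood_eq_cpfTerm, hg]
    rfl

/-- Helstrom limit for channel position finding with orthogonal-replacement
channel outputs (Lemma 3). -/
theorem helstrom_CPF_orc {D : ℕ} (φ ρp : Matrix (Fin D) (Fin D) ℂ)
    (hherm : φᴴ = φ) (hproj : φ * φ = φ) (htr : φ.trace = 1)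
    (hρp : IsDensityMatrix ρp) (horth : φ * ρp = 0)
    (m : ℕ) (hm : 2 ≤ m) (qB qT : ℝ)
    (hB : qB ∈ Set.Icc (0:ℝ) 1) (hT : qT ∈ Set.Icc (0:ℝ) 1)
    (u : ℕ) (hu : 1 ≤ u) :
    helstrom (fun n : Fin m => tensorPow (tensorFam (fun k =>
        if k = n then (qT:ℂ) • ρp + (((1-qT : ℝ)):ℂ) • φ
        else (qB:ℂ) • ρp + (((1-qB : ℝ)):ℂ) • φ)) u)
      (fun _ => 1/(m:ℝ)) = hErr m u qB qT :=
  helstrom_CPF_orc_general φ ρp hherm hproj htr hρp horth m hm qB qT hB hT u
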